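/- Let Γ be a finite simple graph with N edges and maximum vertex degree 𝓜^H ≥ 1, and let {W_e} be real-valued random variables indexed by the edges e of Γ such that |W_e| ≤ A almost surely for every edge e, and such that for any two disjoint sets S₁, S₂ of edges with no edge of S₁ sharing a vertex with any edge of S₂, the families {W_e}_{e ∈ S₁} and {W_f}_{f ∈ S₂} are independent. Let R = ∑_{i} ∑_{j} 1_{i,j} · W_i · W_j, where the sums run over all edges and 1_{i,j} = 1 if edges i and j share a vertex and 0 otherwise. Then Var(R) ≤ 8·A⁴·N·(2𝓜^H − 1)³. -/

import Mathlib

/-!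
Write `R` as the sum of `Z_{ij} = 1_{i,j} W_i W_j` over ordered pairs of edges, so that
`Var R = ∑ Cov(Z_{ij}, Z_{kl})`. By the dependency condition `Cov(W_i W_j, W_k W_l)` vanishes
unless one of `i, j` shares a vertex with one of `k, l`, and it is at most `2A⁴` in any case.
An edge shares a vertex with at most `2𝓜^H − 1` edges (itself included), so each of the four
ways of linking `{i, j}` to `{k, l}` contributes at most `N (2𝓜^H − 1)³` nonvanishing terms:
choose `i`, then its neighbours `j` and `k`, then the neighbour `l` of `k`.
-/

open MeasureTheory ProbabilityTheory Filter Matrix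
open scoped Classical NNReal Topology

noncomputable section

variable {V : Type*} [Fintype V] [DecidableEq V]

/-- The finset of edges of a simple graph. -/
def edgeF (Γ : SimpleGraph V) : Finset (Sym2 V) := Γ.edgeSet.toFinite.toFinset

/-- Two edges share a vertex (an edge shares a vertex with itself). -/
def shares (e f : Sym2 V) : Prop := ∃ v, v ∈ e ∧ v ∈ f

/-- The degree of a vertex: the number of edges containing it. -/
def vdeg (Γ : SimpleGraph V) (v : V) : ℕ := ((edgeF Γ).filter fun e => v ∈ e).card

/-- The maximum vertex degree of the graph. -/
def maxVdeg (Γ : SimpleGraph V) : ℕ := Finset.univ.sup (vdeg Γ)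

section Probability

variable {Ω : Type*} {mΩ : MeasurableSpace Ω} {μ : Measure Ω}

lemma variance_fun_sum_eq_sum_covariance [IsFiniteMeasure μ] {ι : Type*} {s : Finset ι}
    {X : ι → Ω → ℝ} (hX : ∀ i ∈ s, MemLp (X i) 2 μ) :
    variance (fun ω => ∑ i ∈ s, X i ω) μ = ∑ i ∈ s, ∑ j ∈ s, cov[X i, X j; μ] := by
  rw [← covariance_self (memLp_finsetSum s hX).aemeasurable,
    covariance_fun_sum_fun_sum' hX hX]

lemma abs_integral_le_of_abs_le [IsProbabilityMeasure μ] {X : Ω → ℝ} {a : ℝ}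
    (hX : ∀ᵐ ω ∂μ, |X ω| ≤ a) : |∫ ω, X ω ∂μ| ≤ a := by
  simpa using norm_integral_le_of_norm_le_const (μ := μ) (f := X) (by simpa using hX)

lemma ae_abs_mul_le_mul {X Y : Ω → ℝ} {a b : ℝ} (hX : ∀ᵐ ω ∂μ, |X ω| ≤ a)
    (hY : ∀ᵐ ω ∂μ, |Y ω| ≤ b) : ∀ᵐ ω ∂μ, |X ω * Y ω| ≤ a * b := by
  filter_upwards [hX, hY] with ω hXω hYω
  rw [abs_mul]
  exact mul_le_mul hXω hYω (abs_nonneg _) ((abs_nonneg _).trans hXω)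

lemma memLp_mul_of_abs_le [IsFiniteMeasure μ] {X Y : Ω → ℝ} {a b : ℝ} {p : ENNReal}
    (hXm : AEStronglyMeasurable X μ) (hYm : AEStronglyMeasurable Y μ)
    (hX : ∀ᵐ ω ∂μ, |X ω| ≤ a) (hY : ∀ᵐ ω ∂μ, |Y ω| ≤ b) :
    MemLp (fun ω => X ω * Y ω) p μ :=
  MemLp.of_bound (hXm.mul hYm) (a * b) (by simpa using ae_abs_mul_le_mul hX hY)

lemma covariance_le_of_abs_le [IsProbabilityMeasure μ] {X Y : Ω → ℝ} {a b : ℝ}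
    (hXm : AEStronglyMeasurable X μ) (hYm : AEStronglyMeasurable Y μ)
    (hX : ∀ᵐ ω ∂μ, |X ω| ≤ a) (hY : ∀ᵐ ω ∂μ, |Y ω| ≤ b) :
    cov[X, Y; μ] ≤ 2 * (a * b) := by
  have hXa := abs_integral_le_of_abs_le hX
  have hYb := abs_integral_le_of_abs_le hY
  rw [covariance_eq_sub (MemLp.of_bound hXm a (by simpa using hX))
    (MemLp.of_bound hYm b (by simpa using hY))]
  have hprod : |μ[X] * μ[Y]| ≤ a * b := by
    rw [abs_mul]; exact mul_le_mul hXa hYb (abs_nonneg _) ((abs_nonneg _).trans hXa)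
  have hXY := abs_le.1 (abs_integral_le_of_abs_le (ae_abs_mul_le_mul hX hY))
  simp only [Pi.mul_apply]
  linarith [abs_le.1 hprod]

lemma IndepFun.mul_mul_of_pi {ι : Type*} {X : ι → Ω → ℝ} {S₁ S₂ : Finset ι}
    (h : IndepFun (fun ω (i : S₁) => X i.1 ω) (fun ω (j : S₂) => X j.1 ω) μ)
    {i i' j j' : ι} (hi : i ∈ S₁) (hi' : i' ∈ S₁) (hj : j ∈ S₂) (hj' : j' ∈ S₂) :
    IndepFun (fun ω => X i ω * X i' ω) (fun ω => X j ω * X j' ω) μ :=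
  h.comp (φ := fun x : S₁ → ℝ => x ⟨i, hi⟩ * x ⟨i', hi'⟩)
    (ψ := fun x : S₂ → ℝ => x ⟨j, hj⟩ * x ⟨j', hj'⟩) (by fun_prop) (by fun_prop)

end Probability

section Counting

variable {α : Type*} {s : Finset α} {k : α → α → ℝ} {D : ℝ}

lemma sum_path_three_le (hk : ∀ a b, 0 ≤ k a b) (hD : 0 ≤ D)
    (hrow : ∀ a ∈ s, ∑ b ∈ s, k a b ≤ D) :
    ∑ a ∈ s, ∑ b ∈ s, ∑ c ∈ s, ∑ d ∈ s, k a b * k c d * k a c ≤ s.card * D ^ 3 := by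
  have hrow_nonneg : ∀ a, 0 ≤ ∑ b ∈ s, k a b := fun a => Finset.sum_nonneg fun b _ => hk a b
  have hpath : ∀ a ∈ s, ∑ b ∈ s, ∑ c ∈ s, ∑ d ∈ s, k a b * k c d * k a c ≤ D ^ 3 := by
    intro a ha
    calc ∑ b ∈ s, ∑ c ∈ s, ∑ d ∈ s, k a b * k c d * k a c
        = ∑ b ∈ s, k a b * ∑ c ∈ s, k a c * ∑ d ∈ s, k c d := by
          simp only [Finset.mul_sum]
          exact Finset.sum_congr rfl fun _ _ => Finset.sum_congr rfl fun _ _ =>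
            Finset.sum_congr rfl fun _ _ => by ring
      _ ≤ ∑ b ∈ s, k a b * ∑ c ∈ s, k a c * D := by
          gcongr with b hb c hc
          · exact hk a b
          · exact hk a c
          · exact hrow c hc
      _ = (∑ b ∈ s, k a b) * ((∑ c ∈ s, k a c) * D) := by
          rw [Finset.sum_mul, Finset.sum_mul]
      _ ≤ D * (D * D) :=
          mul_le_mul (hrow a ha) (mul_le_mul_of_nonneg_right (hrow a ha) hD)
            (mul_nonneg (hrow_nonneg a) hD) hD
      _ = D ^ 3 := by ring
  simpa using Finset.sum_le_sum hpath

lemma sum_four_paths_le (hk : ∀ a b, 0 ≤ k a b) (hsymm : ∀ a b, k a b = k b a) (hD : 0 ≤ D)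
    (hrow : ∀ a ∈ s, ∑ b ∈ s, k a b ≤ D) :
    ∑ a ∈ s, ∑ b ∈ s, ∑ c ∈ s, ∑ d ∈ s,
        k a b * k c d * (k a c + k a d + k b c + k b d) ≤ 4 * s.card * D ^ 3 := by
  set P := ∑ a ∈ s, ∑ b ∈ s, ∑ c ∈ s, ∑ d ∈ s, k a b * k c d * k a c
  have hswap_cd : ∀ a b x, ∑ c ∈ s, ∑ d ∈ s, k a b * k c d * k x d =
      ∑ c ∈ s, ∑ d ∈ s, k a b * k c d * k x c := fun a b x => by
    rw [Finset.sum_comm]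
    exact Finset.sum_congr rfl fun c _ => Finset.sum_congr rfl fun d _ => by rw [hsymm d c]
  have h_bc : ∑ a ∈ s, ∑ b ∈ s, ∑ c ∈ s, ∑ d ∈ s, k a b * k c d * k b c = P := by
    rw [Finset.sum_comm]
    exact Finset.sum_congr rfl fun a _ => Finset.sum_congr rfl fun b _ => by rw [hsymm b a]
  calc ∑ a ∈ s, ∑ b ∈ s, ∑ c ∈ s, ∑ d ∈ s, k a b * k c d * (k a c + k a d + k b c + k b d)
      = 4 * P := by
        simp only [mul_add, Finset.sum_add_distrib, hswap_cd, h_bc]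
        ring
    _ ≤ 4 * (s.card * D ^ 3) := by gcongr; exact sum_path_three_le hk hD hrow
    _ = 4 * s.card * D ^ 3 := by ring

end Counting

def shareIndicator {U : Type*} (e f : Sym2 U) : ℝ := if shares e f then 1 else 0

lemma shareIndicator_nonneg {U : Type*} (e f : Sym2 U) : 0 ≤ shareIndicator e f := by
  unfold shareIndicator; split_ifs <;> norm_num

lemma shareIndicator_comm {U : Type*} (e f : Sym2 U) :
    shareIndicator e f = shareIndicator f e := by
  have : shares e f ↔ shares f e := by unfold shares; tauto
  simp only [shareIndicator, this]

lemma card_filter_shares_add_one_le {Γ : SimpleGraph V} {e : Sym2 V} (he : e ∈ edgeF Γ) :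
    ((edgeF Γ).filter (shares e)).card + 1 ≤ 2 * maxVdeg Γ := by
  induction e using Sym2.ind with
  | h u v =>
    set Iu := (edgeF Γ).filter fun f => u ∈ f
    set Iv := (edgeF Γ).filter fun f => v ∈ f
    have hsub : (edgeF Γ).filter (shares s(u, v)) ⊆ Iu ∪ Iv := by
      intro f hf
      obtain ⟨hfΓ, w, hw, hwf⟩ := Finset.mem_filter.1 hf
      rcases Sym2.mem_iff.1 hw with rfl | rfl
      · exact Finset.mem_union_left _ (Finset.mem_filter.2 ⟨hfΓ, hwf⟩)
      · exact Finset.mem_union_right _ (Finset.mem_filter.2 ⟨hfΓ, hwf⟩)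
    have hinter : 0 < (Iu ∩ Iv).card := Finset.card_pos.2 ⟨s(u, v), Finset.mem_inter.2
      ⟨Finset.mem_filter.2 ⟨he, Sym2.mem_mk_left u v⟩,
        Finset.mem_filter.2 ⟨he, Sym2.mem_mk_right u v⟩⟩⟩
    have hu : Iu.card ≤ maxVdeg Γ := Finset.le_sup (f := vdeg Γ) (Finset.mem_univ u)
    have hv : Iv.card ≤ maxVdeg Γ := Finset.le_sup (f := vdeg Γ) (Finset.mem_univ v)
    have := Finset.card_le_card hsub
    have := Finset.card_union_add_card_inter Iu Iv
    omega

lemma sum_shareIndicator_le {Γ : SimpleGraph V} {e : Sym2 V} (he : e ∈ edgeF Γ) :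
    ∑ f ∈ edgeF Γ, shareIndicator e f ≤ 2 * (maxVdeg Γ : ℝ) - 1 := by
  have hcard : (((edgeF Γ).filter (shares e)).card : ℝ) + 1 ≤ 2 * maxVdeg Γ := by
    exact_mod_cast card_filter_shares_add_one_le he
  simp only [shareIndicator]
  rw [Finset.sum_boole]
  linarith

def VertexDisjointIndep {Ω : Type*} [MeasurableSpace Ω] (Γ : SimpleGraph V)
    (W : Sym2 V → Ω → ℝ) (μ : Measure Ω) : Prop :=
  ∀ S₁ S₂ : Finset (Sym2 V), ↑S₁ ⊆ Γ.edgeSet → ↑S₂ ⊆ Γ.edgeSet →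
    (∀ e ∈ S₁, ∀ f ∈ S₂, ¬ shares e f) →
    IndepFun (fun ω (e : S₁) => W e.1 ω) (fun ω (f : S₂) => W f.1 ω) μ

section EdgeVariables

variable {Ω : Type*} {mΩ : MeasurableSpace Ω} {μ : Measure Ω} [IsProbabilityMeasure μ]
  {Γ : SimpleGraph V} {W : Sym2 V → Ω → ℝ} {A : ℝ}
  (hmeas : ∀ e ∈ edgeF Γ, Measurable (W e)) (hbdd : ∀ e ∈ edgeF Γ, ∀ᵐ ω ∂μ, |W e ω| ≤ A)
  (hdep : VertexDisjointIndep Γ W μ)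
include hmeas hbdd hdep

lemma covariance_mul_mul_le {e f g h : Sym2 V} (he : e ∈ edgeF Γ) (hf : f ∈ edgeF Γ)
    (hg : g ∈ edgeF Γ) (hh : h ∈ edgeF Γ) :
    cov[fun ω => W e ω * W f ω, fun ω => W g ω * W h ω; μ] ≤
      2 * A ^ 4 * (shareIndicator e g + shareIndicator e h + shareIndicator f g +
        shareIndicator f h) := by
  by_cases hsh : shares e g ∨ shares e h ∨ shares f g ∨ shares f h
  · have hone : 1 ≤ shareIndicator e g + shareIndicator e h + shareIndicator f g +
        shareIndicator f h := by
      simp only [shareIndicator]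
      rcases hsh with hsh | hsh | hsh | hsh <;> simp only [hsh, if_true] <;> split_ifs <;>
        norm_num
    calc cov[fun ω => W e ω * W f ω, fun ω => W g ω * W h ω; μ]
        ≤ 2 * ((A * A) * (A * A)) :=
          covariance_le_of_abs_le ((hmeas e he).mul (hmeas f hf)).aestronglyMeasurable
            ((hmeas g hg).mul (hmeas h hh)).aestronglyMeasurable
            (ae_abs_mul_le_mul (hbdd e he) (hbdd f hf))
            (ae_abs_mul_le_mul (hbdd g hg) (hbdd h hh))
      _ = 2 * A ^ 4 * 1 := by ring
      _ ≤ _ := by gcongr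
  · simp only [not_or] at hsh
    obtain ⟨heg, heh, hfg, hfh⟩ := hsh
    have hpair : ∀ {x y}, x ∈ edgeF Γ → y ∈ edgeF Γ → ↑({x, y} : Finset (Sym2 V)) ⊆ Γ.edgeSet :=
      fun hx hy => by simp_all [Set.insert_subset_iff, edgeF]
    have hindep := IndepFun.mul_mul_of_pi (i := e) (i' := f) (j := g) (j' := h)
      (hdep {e, f} {g, h} (hpair he hf) (hpair hg hh) (by simp [heg, heh, hfg, hfh]))
      (by simp) (by simp) (by simp) (by simp)
    rw [hindep.covariance_eq_zero
      (memLp_mul_of_abs_le (hmeas e he).aestronglyMeasurable (hmeas f hf).aestronglyMeasurable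
        (hbdd e he) (hbdd f hf))
      (memLp_mul_of_abs_le (hmeas g hg).aestronglyMeasurable (hmeas h hh).aestronglyMeasurable
        (hbdd g hg) (hbdd h hh))]
    simp [shareIndicator, heg, heh, hfg, hfh]

lemma covariance_summand_le {e f g h : Sym2 V} (he : e ∈ edgeF Γ) (hf : f ∈ edgeF Γ)
    (hg : g ∈ edgeF Γ) (hh : h ∈ edgeF Γ) :
    cov[fun ω => shareIndicator e f * W e ω * W f ω,
        fun ω => shareIndicator g h * W g ω * W h ω; μ] ≤
      2 * A ^ 4 * (shareIndicator e f * shareIndicator g h *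
        (shareIndicator e g + shareIndicator e h + shareIndicator f g + shareIndicator f h)) := by
  simp_rw [mul_assoc (shareIndicator _ _)]
  rw [covariance_const_mul_left, covariance_const_mul_right, ← mul_assoc]
  refine (mul_le_mul_of_nonneg_left
    (covariance_mul_mul_le hmeas hbdd hdep he hf hg hh)
    (mul_nonneg (shareIndicator_nonneg e f) (shareIndicator_nonneg g h))).trans_eq ?_
  ring

lemma variance_le_sum_linked_quadruples :
    variance (fun ω => ∑ e ∈ edgeF Γ, ∑ f ∈ edgeF Γ, shareIndicator e f * W e ω * W f ω) μ ≤
      2 * A ^ 4 * ∑ a ∈ edgeF Γ, ∑ b ∈ edgeF Γ, ∑ c ∈ edgeF Γ, ∑ d ∈ edgeF Γ,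
        shareIndicator a b * shareIndicator c d *
          (shareIndicator a c + shareIndicator a d + shareIndicator b c + shareIndicator b d) := by
  set T := edgeF Γ
  have hmemLp : ∀ p ∈ T ×ˢ T,
      MemLp (fun ω => shareIndicator p.1 p.2 * W p.1 ω * W p.2 ω) 2 μ := fun p hp => by
    obtain ⟨h₁, h₂⟩ := Finset.mem_product.1 hp
    simpa only [mul_assoc] using (memLp_mul_of_abs_le (hmeas _ h₁).aestronglyMeasurable
      (hmeas _ h₂).aestronglyMeasurable (hbdd _ h₁) (hbdd _ h₂)).const_mul (shareIndicator p.1 p.2)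
  have hR : (fun ω => ∑ e ∈ T, ∑ f ∈ T, shareIndicator e f * W e ω * W f ω) =
      fun ω => ∑ p ∈ T ×ˢ T, shareIndicator p.1 p.2 * W p.1 ω * W p.2 ω := by
    simp only [Finset.sum_product]
  rw [hR, variance_fun_sum_eq_sum_covariance hmemLp]
  calc _ ≤ ∑ p ∈ T ×ˢ T, ∑ q ∈ T ×ˢ T, 2 * A ^ 4 *
        (shareIndicator p.1 p.2 * shareIndicator q.1 q.2 *
          (shareIndicator p.1 q.1 + shareIndicator p.1 q.2 + shareIndicator p.2 q.1 +
            shareIndicator p.2 q.2)) := by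
        refine Finset.sum_le_sum fun p hp => Finset.sum_le_sum fun q hq => ?_
        obtain ⟨hp₁, hp₂⟩ := Finset.mem_product.1 hp
        obtain ⟨hq₁, hq₂⟩ := Finset.mem_product.1 hq
        exact covariance_summand_le hmeas hbdd hdep hp₁ hp₂ hq₁ hq₂
    _ = _ := by simp only [Finset.sum_product, Finset.mul_sum]

end EdgeVariables

/-- If the `W_e`, indexed by the edges of `Γ`, are a.s. bounded by `A` and satisfy the
dyadic dependence condition (vertex-disjoint families of edges carry independent
variables), then `R = ∑_i ∑_j 1_{i,j} W_i W_j` satisfies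
`Var(R) ≤ 8 A⁴ N (2𝓜^H − 1)³`. -/
theorem variance_bound_meat
    {Ωs : Type} [MeasureSpace Ωs] [IsProbabilityMeasure (volume : Measure Ωs)]
    (Γ : SimpleGraph V)
    (W : Sym2 V → Ωs → ℝ)
    (hmeas : ∀ e ∈ edgeF Γ, Measurable (W e))
    (A : ℝ)
    (hbdd : ∀ e ∈ edgeF Γ, ∀ᵐ ω, |W e ω| ≤ A)
    (hMH1 : 1 ≤ maxVdeg Γ)
    (hdep : ∀ S₁ S₂ : Finset (Sym2 V), ↑S₁ ⊆ Γ.edgeSet → ↑S₂ ⊆ Γ.edgeSet →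
      (∀ e ∈ S₁, ∀ f ∈ S₂, ¬ shares e f) →
      IndepFun (fun ω (e : S₁) => W e.1 ω) (fun ω (f : S₂) => W f.1 ω)) :
    variance (fun ω => ∑ e ∈ edgeF Γ, ∑ f ∈ edgeF Γ,
        (if shares e f then (1:ℝ) else 0) * W e ω * W f ω) volume
      ≤ 8 * A ^ 4 * ((edgeF Γ).card : ℝ) * (2 * (maxVdeg Γ : ℝ) - 1) ^ 3 := by
  have hD : 0 ≤ 2 * (maxVdeg Γ : ℝ) - 1 := by
    have : (1 : ℝ) ≤ maxVdeg Γ := by exact_mod_cast hMH1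
    linarith
  calc _ ≤ _ := variance_le_sum_linked_quadruples hmeas hbdd hdep
    _ ≤ 2 * A ^ 4 * (4 * (edgeF Γ).card * (2 * (maxVdeg Γ : ℝ) - 1) ^ 3) := by
        gcongr
        exact sum_four_paths_le shareIndicator_nonneg shareIndicator_comm hD
          fun e he => sum_shareIndicator_le he
    _ = _ := by ring
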